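/- arXiv:math/0701875 — 2 statements merged into one kernel-verified Lean document; each statement's English description precedes it below -/
import Mathlib

section
/- Let f : ℝ^n → ℝ be a continuous function and g : ℝ^n → ℝ^n a continuous vector field. Suppose that for every index i with 1 ≤ i ≤ n, every point x ∈ ℝ^n, every sequence (q_k) of rational points in ℝ^n (i.e. points whose coordinates are all rational) converging to x, and every sequence (r_k) of nonzero rational numbers converging to 0, one has lim_{k→∞} (f(q_k + r_k e_i) − f(q_k))/r_k = g_i(x), where e_i denotes the i-th standard unit vector. Then f is (totally) differentiable on ℝ^n and its gradient equals g, i.e. ∇f(x) = g(x) for all x. -/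
open Filter


lemma coord_abs_le_norm {n : ℕ} (w : EuclideanSpace ℝ (Fin n)) (i : Fin n) : |w i| ≤ ‖w‖ := by
  have h : w i = inner ℝ (EuclideanSpace.single i (1:ℝ)) w := by
    simp [EuclideanSpace.inner_single_left]
  calc |w i| = |inner ℝ (EuclideanSpace.single i (1:ℝ)) w| := by rw [h]
    _ ≤ ‖EuclideanSpace.single i (1:ℝ)‖ * ‖w‖ := abs_real_inner_le_norm _ _
    _ = ‖w‖ := by simp [EuclideanSpace.norm_single]

lemma decomp {n : ℕ} (w : EuclideanSpace ℝ (Fin n)) :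
    ∑ j : Fin n, w j • EuclideanSpace.single j (1:ℝ) = w := by
  ext k
  rw [show (∑ j : Fin n, w j • EuclideanSpace.single j (1:ℝ)) k
      = ∑ j : Fin n, (w j • EuclideanSpace.single j (1:ℝ)) k from by rw [WithLp.ofLp_sum]; exact Finset.sum_apply k _ _]
  simp [EuclideanSpace.single_apply]

lemma norm_le_sum_abs {n : ℕ} (w : EuclideanSpace ℝ (Fin n)) : ‖w‖ ≤ ∑ j : Fin n, |w j| := by
  conv_lhs => rw [← decomp w]
  refine (norm_sum_le _ _).trans ?_
  refine Finset.sum_le_sum fun j _ => ?_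
  rw [norm_smul]
  simp [EuclideanSpace.norm_single]

lemma rat_dense {n : ℕ} (x : EuclideanSpace ℝ (Fin n)) {ε : ℝ} (hε : 0 < ε) :
    ∃ q : EuclideanSpace ℝ (Fin n), (∀ j, ∃ a : ℚ, q j = (a : ℝ)) ∧ dist q x < ε := by
  have hε' : 0 < ε / (n + 1) := by positivity
  have h : ∀ j : Fin n, ∃ a : ℚ, |x j - (a:ℝ)| < ε / (n+1) := fun j => exists_rat_near (x j) hε'
  choose a ha using h
  set q : EuclideanSpace ℝ (Fin n) := WithLp.toLp 2 (fun j => (a j : ℝ)) with hq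
  refine ⟨q, fun j => ⟨a j, rfl⟩, ?_⟩
  rw [dist_eq_norm]
  calc ‖q - x‖ ≤ ∑ j : Fin n, |(q - x) j| := norm_le_sum_abs _
    _ ≤ ∑ _j : Fin n, ε / (n+1) := by
        refine Finset.sum_le_sum fun j _ => ?_
        have : (q - x) j = (a j : ℝ) - x j := rfl
        rw [this, abs_sub_comm]
        exact (ha j).le
    _ = n * (ε / (n+1)) := by simp [mul_comm]
    _ < ε := by
        rw [mul_div_assoc']
        rw [div_lt_iff₀ (by positivity)]
        nlinarith

theorem key0 (n : ℕ) (f : EuclideanSpace ℝ (Fin n) → ℝ)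
    (g : EuclideanSpace ℝ (Fin n) → EuclideanSpace ℝ (Fin n))
    (hf : Continuous f)
    (H : ∀ (i : Fin n) (x : EuclideanSpace ℝ (Fin n))
      (q : ℕ → EuclideanSpace ℝ (Fin n)) (r : ℕ → ℝ),
      (∀ k j, ∃ a : ℚ, q k j = (a : ℝ)) →
      Tendsto q atTop (nhds x) →
      (∀ k, r k ≠ 0 ∧ ∃ a : ℚ, r k = (a : ℝ)) →
      Tendsto r atTop (nhds 0) →
      Tendsto (fun k => (f (q k + r k • EuclideanSpace.single i 1) - f (q k)) / r k)
        atTop (nhds (g x i)))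
    (i : Fin n) (x : EuclideanSpace ℝ (Fin n)) :
    Tendsto (fun t : ℝ => (f (x + t • EuclideanSpace.single i 1) - f x) / t)
      (nhdsWithin 0 {0}ᶜ) (nhds (g x i)) := by
  rw [tendsto_iff_seq_tendsto]
  intro t ht
  have htt : Tendsto t atTop (nhds 0) := ht.mono_right nhdsWithin_le_nhds
  have hne : ∀ᶠ k in atTop, t k ≠ 0 := ht self_mem_nhdsWithin
  -- construct rational approximations
  have claim : ∀ k : ℕ, ∃ (q : EuclideanSpace ℝ (Fin n)) (r : ℝ),
      (∀ j, ∃ a : ℚ, q j = (a : ℝ)) ∧ (r ≠ 0 ∧ ∃ a : ℚ, r = (a : ℝ)) ∧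
      dist q x < 1/(k+1) ∧ |r| ≤ |t k| + 1/(k+1) ∧
      (t k ≠ 0 → |(f (q + r • EuclideanSpace.single i 1) - f q)/r
        - (f (x + t k • EuclideanSpace.single i 1) - f x)/(t k)| < 1/(k+1)) := by
    intro k
    have hk : (0:ℝ) < 1/(k+1) := by positivity
    by_cases h0 : t k = 0
    · obtain ⟨q, hq, hqd⟩ := rat_dense x hk
      refine ⟨q, 1/(k+1), hq, ⟨ne_of_gt hk, ⟨1/((k:ℚ)+1), by push_cast; ring⟩⟩, hqd, ?_, fun h => absurd h0 h⟩
      rw [abs_of_pos hk]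
      simp [h0]
    · -- continuity of the quotient at (x, t k)
      set Q : EuclideanSpace ℝ (Fin n) × ℝ → ℝ :=
        fun p => (f (p.1 + p.2 • EuclideanSpace.single i 1) - f p.1) / p.2 with hQ
      have hcont : ContinuousAt Q (x, t k) := by
        apply ContinuousAt.div
        · exact ((hf.comp (continuous_fst.add (continuous_snd.smul continuous_const))).sub
            (hf.comp continuous_fst)).continuousAt
        · exact continuous_snd.continuousAt
        · exact h0
      rw [Metric.continuousAt_iff] at hcont
      obtain ⟨δ, hδpos, hδ⟩ := hcont (1/(k+1)) hk
      set δ' := min δ (min (1/(k+1)) |t k|) with hδ'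
      have hδ'pos : 0 < δ' := lt_min hδpos (lt_min hk (abs_pos.mpr h0))
      obtain ⟨q, hq, hqd⟩ := rat_dense x hδ'pos
      obtain ⟨a, hra⟩ := exists_rat_near (t k) hδ'pos
      set r : ℝ := (a : ℝ) with hr
      have hrtk : |r - t k| < δ' := by rw [abs_sub_comm]; exact hra
      have hδ'le : δ' ≤ |t k| := (min_le_right _ _).trans (min_le_right _ _)
      have hδ'le1 : δ' ≤ 1/(k+1) := (min_le_right _ _).trans (min_le_left _ _)
      have hδ'leδ : δ' ≤ δ := min_le_left _ _
      have hrne : r ≠ 0 := by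
        intro h
        rw [h, zero_sub, abs_neg] at hrtk
        exact absurd (hrtk.trans_le hδ'le) (lt_irrefl _)
      refine ⟨q, r, hq, ⟨hrne, ⟨a, rfl⟩⟩, hqd.trans_le hδ'le1, ?_, fun _ => ?_⟩
      · calc |r| ≤ |t k| + |r - t k| := by
              have := abs_sub_abs_le_abs_sub r (t k); linarith [abs_nonneg (r - t k)]
          _ ≤ |t k| + 1/(k+1) := by linarith [hrtk.le.trans hδ'le1]
      · have hd : dist (q, r) (x, t k) < δ := by
          rw [Prod.dist_eq]
          have h2 : dist r (t k) < δ' := by rwa [Real.dist_eq]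
          exact max_lt (hqd.trans_le hδ'leδ) (h2.trans_le hδ'leδ)
        have := hδ hd
        rw [Real.dist_eq] at this
        exact this
  choose q r hq hr hqd hrb hquot using claim
  have hqx : Tendsto q atTop (nhds x) := by
    rw [tendsto_iff_dist_tendsto_zero]
    refine squeeze_zero (fun k => dist_nonneg) (fun k => (hqd k).le) ?_
    exact tendsto_one_div_add_atTop_nhds_zero_nat
  have hr0 : Tendsto r atTop (nhds 0) := by
    refine squeeze_zero_norm (fun k => (hrb k)) ?_
    have h1 : Tendsto (fun k : ℕ => |t k| + 1/(k+1)) atTop (nhds (|0| + 0)) :=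
      htt.abs.add tendsto_one_div_add_atTop_nhds_zero_nat
    simpa using h1
  have hQ := H i x q r hq hqx hr hr0
  have hdiff : Tendsto (fun k => (f (x + t k • EuclideanSpace.single i 1) - f x)/(t k)
      - (f (q k + r k • EuclideanSpace.single i 1) - f (q k))/(r k)) atTop (nhds 0) := by
    refine squeeze_zero_norm' ?_ (tendsto_one_div_add_atTop_nhds_zero_nat)
    filter_upwards [hne] with k hk
    rw [Real.norm_eq_abs, abs_sub_comm]
    exact (hquot k hk).le
  have := hQ.add hdiff
  simp only [add_sub_cancel] at this
  simpa [Function.comp_def] using this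


theorem key1 (n : ℕ) (f : EuclideanSpace ℝ (Fin n) → ℝ)
    (g : EuclideanSpace ℝ (Fin n) → EuclideanSpace ℝ (Fin n))
    (k0 : ∀ (i : Fin n) (x : EuclideanSpace ℝ (Fin n)),
      Tendsto (fun t : ℝ => (f (x + t • EuclideanSpace.single i 1) - f x) / t)
        (nhdsWithin 0 {0}ᶜ) (nhds (g x i)))
    (i : Fin n) (x : EuclideanSpace ℝ (Fin n)) :
    HasDerivAt (fun t : ℝ => f (x + t • EuclideanSpace.single i 1)) (g x i) 0 := by
  rw [hasDerivAt_iff_tendsto_slope]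
  refine (k0 i x).congr fun t => ?_
  rw [slope_def_field]
  simp [div_eq_mul_inv]

theorem key2 (n : ℕ) (f : EuclideanSpace ℝ (Fin n) → ℝ)
    (g : EuclideanSpace ℝ (Fin n) → EuclideanSpace ℝ (Fin n))
    (k1 : ∀ (i : Fin n) (x : EuclideanSpace ℝ (Fin n)),
      HasDerivAt (fun t : ℝ => f (x + t • EuclideanSpace.single i 1)) (g x i) 0)
    (i : Fin n) (z : EuclideanSpace ℝ (Fin n)) (t : ℝ) :
    HasDerivAt (fun s : ℝ => f (z + s • EuclideanSpace.single i 1))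
      (g (z + t • EuclideanSpace.single i 1) i) t := by
  set E := EuclideanSpace.single i (1:ℝ) with hE
  have h1 := k1 i (z + t • E)
  have h2 : HasDerivAt (fun s : ℝ => s - t) 1 t := by
    simpa using (hasDerivAt_id t).sub_const t
  have h2' : (fun s : ℝ => s - t) t = 0 := by simp
  have h3 := HasDerivAt.comp t (h2' ▸ h1) h2
  have h4 : ((fun s : ℝ => f (z + t • E + s • E)) ∘ (fun s : ℝ => s - t))
      = fun s : ℝ => f (z + s • E) := by
    funext s
    simp only [Function.comp_apply]
    congr 1
    module
  rw [h4] at h3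
  simpa using h3

theorem main (n : ℕ) (f : EuclideanSpace ℝ (Fin n) → ℝ)
    (g : EuclideanSpace ℝ (Fin n) → EuclideanSpace ℝ (Fin n)) (hg : Continuous g)
    (k2 : ∀ (i : Fin n) (z : EuclideanSpace ℝ (Fin n)) (t : ℝ),
      HasDerivAt (fun s : ℝ => f (z + s • EuclideanSpace.single i 1))
        (g (z + t • EuclideanSpace.single i 1) i) t)
    (x : EuclideanSpace ℝ (Fin n)) : HasGradientAt f (g x) x := by
  rw [hasGradientAt_iff_hasFDerivAt, hasFDerivAt_iff_isLittleO_nhds_zero,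
    Asymptotics.isLittleO_iff]
  intro c hc
  set ε := c / (n + 1) with hε
  have hεpos : 0 < ε := by positivity
  obtain ⟨δ, hδpos, hδ⟩ := Metric.continuousAt_iff.mp hg.continuousAt ε hεpos
  set δ₀ := δ / (n + 2) with hδ₀
  have hδ₀pos : 0 < δ₀ := by positivity
  filter_upwards [Metric.ball_mem_nhds (0 : EuclideanSpace ℝ (Fin n)) hδ₀pos] with v hv
  rw [Metric.mem_ball, dist_zero_right] at hv
  -- the linear map applied
  have hlin : (InnerProductSpace.toDual ℝ (EuclideanSpace ℝ (Fin n)) (g x)) v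
      = ∑ i : Fin n, g x i * v i := by
    simp [InnerProductSpace.toDual_apply_apply, PiLp.inner_apply, RCLike.inner_apply]
    exact Finset.sum_congr rfl fun _ _ => mul_comm _ _
  set E : Fin n → EuclideanSpace ℝ (Fin n) := fun i => EuclideanSpace.single i 1 with hEdef
  set T : ℕ → EuclideanSpace ℝ (Fin n) :=
    fun m => x + ∑ j ∈ Finset.univ.filter (fun j : Fin n => (j:ℕ) < m), v j • E j with hT
  have hT0 : T 0 = x := by simp [hT]
  have hTn : T n = x + v := by
    have : Finset.univ.filter (fun j : Fin n => (j:ℕ) < n) = Finset.univ := by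
      ext j; simp [j.isLt]
    rw [hT]; simp only [this]
    rw [decomp v]
  have hTsucc : ∀ m (hm : m < n), T (m+1) = T m + v ⟨m, hm⟩ • E ⟨m, hm⟩ := by
    intro m hm
    have hset : Finset.univ.filter (fun j : Fin n => (j:ℕ) < m+1)
        = insert ⟨m, hm⟩ (Finset.univ.filter (fun j : Fin n => (j:ℕ) < m)) := by
      ext j
      simp only [Finset.mem_filter, Finset.mem_univ, true_and, Finset.mem_insert,
        Nat.lt_succ_iff_lt_or_eq]
      constructor
      · rintro (h | h)
        · exact Or.inr h
        · exact Or.inl (Fin.ext h)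
      · rintro (h | h)
        · exact Or.inr (by rw [h])
        · exact Or.inl h
    have hnotmem : (⟨m, hm⟩ : Fin n) ∉ Finset.univ.filter (fun j : Fin n => (j:ℕ) < m) := by
      simp
    rw [hT]
    simp only [hset, Finset.sum_insert hnotmem]
    abel
  have hTdist : ∀ m, ‖T m - x‖ ≤ n * ‖v‖ := by
    intro m
    rw [hT]
    simp only [add_sub_cancel_left]
    calc ‖∑ j ∈ Finset.univ.filter (fun j : Fin n => (j:ℕ) < m), v j • E j‖
        ≤ ∑ j ∈ Finset.univ.filter (fun j : Fin n => (j:ℕ) < m), ‖v j • E j‖ := norm_sum_le _ _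
      _ ≤ ∑ _j ∈ Finset.univ.filter (fun j : Fin n => (j:ℕ) < m), ‖v‖ := by
          refine Finset.sum_le_sum fun j _ => ?_
          rw [norm_smul]
          simp only [hEdef, EuclideanSpace.norm_single, norm_one, mul_one, Real.norm_eq_abs]
          exact coord_abs_le_norm v j
      _ ≤ n * ‖v‖ := by
          rw [Finset.sum_const, nsmul_eq_mul]
          have : (Finset.univ.filter (fun j : Fin n => (j:ℕ) < m)).card ≤ n := by
            refine le_trans (Finset.card_filter_le _ _) (by simp)
          exact mul_le_mul_of_nonneg_right (by exact_mod_cast this) (norm_nonneg v)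
  -- per-term estimate
  have hterm : ∀ m (hm : m < n),
      |f (T (m+1)) - f (T m) - v ⟨m, hm⟩ * g x ⟨m, hm⟩| ≤ ε * ‖v‖ := by
    intro m hm
    set i : Fin n := ⟨m, hm⟩ with hi
    set φ : ℝ → ℝ := fun t => f (T m + t • E i) - t * g x i with hφ
    set φ' : ℝ → ℝ := fun t => g (T m + t • E i) i - g x i with hφ'
    have hder : ∀ t, HasDerivAt φ (φ' t) t := fun t =>
      (k2 i (T m) t).sub (hasDerivAt_mul_const (g x i))
    have hball : ∀ t ∈ Set.uIcc (0:ℝ) (v i), dist (T m + t • E i) x < δ := by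
      intro t ht
      have habs : |t| ≤ |v i| := by
        rw [Set.mem_uIcc] at ht
        have h1 := neg_abs_le (v i); have h2 := le_abs_self (v i); have h3 := abs_nonneg (v i)
        rcases ht with ⟨ha, hb⟩ | ⟨ha, hb⟩ <;> rw [abs_le] <;> constructor <;> linarith
      have hvi : |v i| ≤ ‖v‖ := coord_abs_le_norm v i
      have hEt : ‖t • E i‖ = |t| := by
        rw [norm_smul]
        simp [hEdef, EuclideanSpace.norm_single]
      calc dist (T m + t • E i) x = ‖(T m - x) + t • E i‖ := by
            rw [dist_eq_norm]; congr 1; abel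
        _ ≤ ‖T m - x‖ + ‖t • E i‖ := norm_add_le _ _
        _ ≤ n * ‖v‖ + ‖v‖ := by
            have := hTdist m
            rw [hEt]
            linarith [habs.trans hvi]
        _ = (n + 1) * ‖v‖ := by ring
        _ < (n + 1) * δ₀ := by
            apply mul_lt_mul_of_pos_left hv
            positivity
        _ ≤ δ := by
            rw [hδ₀, mul_div_assoc']
            rw [div_le_iff₀ (by positivity)]
            nlinarith
    have hbound : ∀ t ∈ Set.uIcc (0:ℝ) (v i), ‖φ' t‖ ≤ ε := by
      intro t ht
      have hy := hδ (hball t ht)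
      rw [dist_eq_norm] at hy
      have hco : |(g (T m + t • E i) - g x) i| ≤ ‖g (T m + t • E i) - g x‖ :=
        coord_abs_le_norm _ i
      have happ : (g (T m + t • E i) - g x) i = g (T m + t • E i) i - g x i := rfl
      rw [happ] at hco
      rw [hφ', Real.norm_eq_abs]
      exact hco.trans hy.le
    have hmvt := (convex_uIcc (0:ℝ) (v i)).norm_image_sub_le_of_norm_hasDerivWithin_le
      (fun t _ => (hder t).hasDerivWithinAt) hbound Set.left_mem_uIcc Set.right_mem_uIcc
    have hφval : φ (v i) - φ 0 = f (T m + v i • E i) - f (T m) - v i * g x i := by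
      simp [hφ]
      ring
    rw [hTsucc m hm, ← hφval]
    have : ε * ‖v i - 0‖ ≤ ε * ‖v‖ := by
      apply mul_le_mul_of_nonneg_left _ hεpos.le
      rw [sub_zero, Real.norm_eq_abs]
      exact coord_abs_le_norm v i
    calc |φ (v i) - φ 0| ≤ ε * ‖v i - 0‖ := hmvt
      _ ≤ ε * ‖v‖ := this
  -- telescoping
  set F : ℕ → ℝ := fun m => f (T m) with hF
  set vv : ℕ → ℝ := fun m => if h : m < n then v ⟨m, h⟩ * g x ⟨m, h⟩ else 0 with hvv
  have hsum1 : ∑ m ∈ Finset.range n, (F (m+1) - F m) = F n - F 0 := Finset.sum_range_sub F n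
  have hsum2 : ∑ i : Fin n, g x i * v i = ∑ m ∈ Finset.range n, vv m := by
    rw [← Fin.sum_univ_eq_sum_range]
    refine Finset.sum_congr rfl fun i _ => ?_
    rw [hvv]
    simp only []
    rw [dif_pos i.isLt]
    simp [mul_comm]
  have key : f (x + v) - f x - (InnerProductSpace.toDual ℝ (EuclideanSpace ℝ (Fin n)) (g x)) v
      = ∑ m ∈ Finset.range n, (F (m+1) - F m - vv m) := by
    rw [Finset.sum_sub_distrib, hsum1, hlin, hsum2, hF]
    simp only []
    rw [hT0, hTn]
  rw [Real.norm_eq_abs, key]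
  calc |∑ m ∈ Finset.range n, (F (m+1) - F m - vv m)|
      ≤ ∑ m ∈ Finset.range n, |F (m+1) - F m - vv m| := Finset.abs_sum_le_sum_abs _ _
    _ ≤ ∑ _m ∈ Finset.range n, ε * ‖v‖ := by
        refine Finset.sum_le_sum fun m hm => ?_
        have hmn : m < n := Finset.mem_range.mp hm
        have := hterm m hmn
        rw [hvv]
        simp only []
        rw [dif_pos hmn]
        exact this
    _ = n * (ε * ‖v‖) := by rw [Finset.sum_const, Finset.card_range, nsmul_eq_mul]
    _ ≤ c * ‖v‖ := by
        rw [hε]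
        rw [← mul_assoc]
        apply mul_le_mul_of_nonneg_right _ (norm_nonneg v)
        rw [mul_div_assoc']
        rw [div_le_iff₀ (by positivity)]
        nlinarith



/-- If `f : ℝⁿ → ℝ` is continuous, `g : ℝⁿ → ℝⁿ` is a continuous vector
field, and for every coordinate `i`, every `x`, every sequence of rational points `q_k → x`
and every sequence of nonzero rationals `r_k → 0` the difference quotients
`(f (q_k + r_k e_i) - f (q_k)) / r_k` converge to `g_i(x)`, then `f` is (totally)
differentiable everywhere and `∇f = g`. -/
theorem stmt_0 (n : ℕ) (f : EuclideanSpace ℝ (Fin n) → ℝ)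
    (g : EuclideanSpace ℝ (Fin n) → EuclideanSpace ℝ (Fin n))
    (hf : Continuous f) (hg : Continuous g)
    (H : ∀ (i : Fin n) (x : EuclideanSpace ℝ (Fin n))
      (q : ℕ → EuclideanSpace ℝ (Fin n)) (r : ℕ → ℝ),
      (∀ k j, ∃ a : ℚ, q k j = (a : ℝ)) →
      Tendsto q atTop (nhds x) →
      (∀ k, r k ≠ 0 ∧ ∃ a : ℚ, r k = (a : ℝ)) →
      Tendsto r atTop (nhds 0) →
      Tendsto (fun k => (f (q k + r k • EuclideanSpace.single i 1) - f (q k)) / r k)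
        atTop (nhds (g x i))) :
    ∀ x, DifferentiableAt ℝ f x ∧ gradient f x = g x := by
  intro x
  have k0 := key0 n f g hf H
  have k1 := key1 n f g k0
  have k2 := key2 n f g k1
  have hm := main n f g hg k2 x
  exact ⟨hm.hasFDerivAt.differentiableAt, hm.gradient⟩
end

section
/- Let (Ω, 𝓕, P) be a probability space, let ρ : Ω → ℝ be measurable with ρ > 0 P-almost surely and ∫ ρ dP = 1, and let Q be the probability measure on (Ω, 𝓕) with density ρ with respect to P. Let r > 1 with conjugate exponent q = r/(r − 1), and let D > 0 be a constant such that (∫ ρ^r dP)^{1/r} ≤ D and (∫ ρ^{−r} dQ)^{1/r} ≤ D. Then for every nonnegative measurable function X : Ω → ℝ one has ∫ X dP ≤ D^{(1+q)/q} · (∫ X^{q²} dP)^{1/q²}. -/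
open MeasureTheory
open scoped ENNReal

/-! Hölder's inequality is applied twice, each time against a density with an `L^r` bound.
Under `Q = ρ P`, `∫ X dP = ∫ ρ⁻¹ X dQ ≤ ‖ρ⁻¹‖_{L^r(Q)} ‖X‖_{L^q(Q)}`; and
`∫ X^q dQ = ∫ ρ X^q dP ≤ ‖ρ‖_{L^r(P)} ‖X^q‖_{L^q(P)}`. Combining the two gives the bound
`D · (D ‖X‖_{L^{q²}(P)}^q)^{1/q}`. -/

section

variable {α : Type*} [MeasurableSpace α] {μ : Measure α} {g : α → ℝ≥0∞}

theorem lintegral_eq_lintegral_inv_mul_withDensity (hg : Measurable g)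
    (hg0 : ∀ᵐ x ∂μ, g x ≠ 0) (hgtop : ∀ᵐ x ∂μ, g x ≠ ∞) {f : α → ℝ≥0∞} (hf : Measurable f) :
    ∫⁻ x, f x ∂μ = ∫⁻ x, (g x)⁻¹ * f x ∂μ.withDensity g := by
  conv_lhs => rw [← withDensity_inv_same hg hg0 hgtop]
  exact lintegral_withDensity_eq_lintegral_mul _ hg.inv hf

theorem lintegral_le_mul_rpow_mul_lintegral_rpow_sq {p q : ℝ} (hpq : p.HolderConjugate q)
    {d : ℝ≥0∞} (hg : Measurable g) (hg0 : ∀ᵐ x ∂μ, g x ≠ 0) (hgtop : ∀ᵐ x ∂μ, g x ≠ ∞)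
    (hgp : (∫⁻ x, g x ^ p ∂μ) ^ (1 / p) ≤ d)
    (hginv : (∫⁻ x, (g x)⁻¹ ^ p ∂μ.withDensity g) ^ (1 / p) ≤ d)
    {f : α → ℝ≥0∞} (hf : Measurable f) :
    ∫⁻ x, f x ∂μ ≤ d * d ^ (1 / q) * (∫⁻ x, f x ^ (q ^ 2) ∂μ) ^ (1 / q ^ 2) := by
  have hq : 0 ≤ 1 / q := by have := hpq.symm.pos; positivity
  have hfq : Measurable fun x => f x ^ q := hf.pow_const q
  calc ∫⁻ x, f x ∂μ = ∫⁻ x, (g x)⁻¹ * f x ∂μ.withDensity g :=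
        lintegral_eq_lintegral_inv_mul_withDensity hg hg0 hgtop hf
    _ ≤ (∫⁻ x, (g x)⁻¹ ^ p ∂μ.withDensity g) ^ (1 / p) *
          (∫⁻ x, f x ^ q ∂μ.withDensity g) ^ (1 / q) :=
        ENNReal.lintegral_mul_le_Lp_mul_Lq _ hpq hg.inv.aemeasurable hf.aemeasurable
    _ ≤ d * (∫⁻ x, g x * f x ^ q ∂μ) ^ (1 / q) := by
        rw [lintegral_withDensity_eq_lintegral_mul _ hg hfq]
        exact mul_le_mul_left hginv _
    _ ≤ d * ((∫⁻ x, g x ^ p ∂μ) ^ (1 / p) * (∫⁻ x, (f x ^ q) ^ q ∂μ) ^ (1 / q)) ^ (1 / q) := by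
        gcongr
        exact ENNReal.lintegral_mul_le_Lp_mul_Lq _ hpq hg.aemeasurable hfq.aemeasurable
    _ ≤ d * (d * (∫⁻ x, f x ^ (q ^ 2) ∂μ) ^ (1 / q)) ^ (1 / q) := by
        simp_rw [← ENNReal.rpow_mul, ← sq]
        gcongr
    _ = d * d ^ (1 / q) * (∫⁻ x, f x ^ (q ^ 2) ∂μ) ^ (1 / q ^ 2) := by
        rw [ENNReal.mul_rpow_of_nonneg _ _ hq, ← ENNReal.rpow_mul, mul_assoc, one_div_mul_one_div,
          ← sq]

end

theorem stmt_10_general {Ω : Type*} [MeasurableSpace Ω] (P : Measure Ω)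
    (ρ : Ω → ℝ) (hρmeas : Measurable ρ) (hρpos : ∀ᵐ ω ∂P, 0 < ρ ω)
    (Q : Measure Ω) (hQ : Q = P.withDensity fun ω => ENNReal.ofReal (ρ ω))
    (r q D : ℝ) (hr : 1 < r) (hq : q = r / (r - 1)) (hD : 0 < D)
    (hρr : (∫⁻ ω, ENNReal.ofReal (ρ ω ^ r) ∂P) ^ (1 / r) ≤ ENNReal.ofReal D)
    (hρrinv : (∫⁻ ω, ENNReal.ofReal (ρ ω ^ (-r)) ∂Q) ^ (1 / r) ≤ ENNReal.ofReal D)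
    (X : Ω → ℝ) (hXmeas : Measurable X) (hXnn : ∀ ω, 0 ≤ X ω) :
    ∫⁻ ω, ENNReal.ofReal (X ω) ∂P ≤
      ENNReal.ofReal (D ^ ((1 + q) / q)) *
        (∫⁻ ω, ENNReal.ofReal (X ω ^ (q ^ 2)) ∂P) ^ (1 / q ^ 2) := by
  have hrq : r.HolderConjugate q := hq ▸ Real.HolderConjugate.conjExponent hr
  have hρposQ : ∀ᵐ ω ∂Q, 0 < ρ ω := (hQ ▸ withDensity_absolutelyContinuous _ _).ae_le hρpos
  have hρr' : (∫⁻ ω, ENNReal.ofReal (ρ ω) ^ r ∂P) ^ (1 / r) ≤ ENNReal.ofReal D := by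
    refine le_of_eq_of_le ?_ hρr
    congr 1
    exact lintegral_congr_ae (hρpos.mono fun ω hω => ENNReal.ofReal_rpow_of_pos hω)
  have hρrinv' : (∫⁻ ω, (ENNReal.ofReal (ρ ω))⁻¹ ^ r ∂Q) ^ (1 / r) ≤ ENNReal.ofReal D := by
    refine le_of_eq_of_le ?_ hρrinv
    congr 1
    refine lintegral_congr_ae (hρposQ.mono fun ω hω => ?_)
    dsimp only
    rw [← ENNReal.ofReal_rpow_of_pos hω, ENNReal.rpow_neg, ENNReal.inv_rpow]
  have hD_pow :
      ENNReal.ofReal (D ^ ((1 + q) / q)) = ENNReal.ofReal D * ENNReal.ofReal D ^ (1 / q) := by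
    have hq0 : 0 < q := hrq.symm.pos
    rw [ENNReal.ofReal_rpow_of_pos hD, ← ENNReal.ofReal_mul hD.le,
      ← Real.rpow_one_add' hD.le (by positivity), add_div, div_self hq0.ne', add_comm]
  have hX_pow : ∀ ω, ENNReal.ofReal (X ω ^ (q ^ 2)) = ENNReal.ofReal (X ω) ^ (q ^ 2) := fun ω =>
    (ENNReal.ofReal_rpow_of_nonneg (hXnn ω) (sq_nonneg q)).symm
  simp_rw [hD_pow, hX_pow]
  subst hQ
  exact lintegral_le_mul_rpow_mul_lintegral_rpow_sq hrq hρmeas.ennreal_ofReal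
    (hρpos.mono fun ω hω => (ENNReal.ofReal_pos.2 hω).ne')
    (ae_of_all _ fun _ => ENNReal.ofReal_ne_top)
    hρr' hρrinv' hXmeas.ennreal_ofReal

/-- reverse-Hölder type estimate. Let `(Ω, 𝓕, P)` be a probability
space, `ρ > 0` a.s. measurable with `∫ ρ dP = 1`, and let `Q` be the probability measure
with density `ρ` with respect to `P`. Let `r > 1` with conjugate exponent `q = r/(r−1)`,
and `D > 0` with `(∫ ρ^r dP)^{1/r} ≤ D` and `(∫ ρ^{−r} dQ)^{1/r} ≤ D`. Then for every
nonnegative measurable `X : Ω → ℝ`,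
`∫ X dP ≤ D^{(1+q)/q} · (∫ X^{q²} dP)^{1/q²}`, the inequality being understood in `[0,∞]`. -/
theorem stmt_10 {Ω : Type*} [MeasurableSpace Ω] (P : Measure Ω) [IsProbabilityMeasure P]
    (ρ : Ω → ℝ) (hρmeas : Measurable ρ) (hρpos : ∀ᵐ ω ∂P, 0 < ρ ω)
    (hρint : ∫ ω, ρ ω ∂P = 1)
    (Q : Measure Ω) (hQ : Q = P.withDensity fun ω => ENNReal.ofReal (ρ ω))
    (r q D : ℝ) (hr : 1 < r) (hq : q = r / (r - 1)) (hD : 0 < D)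
    (hρr : (∫⁻ ω, ENNReal.ofReal (ρ ω ^ r) ∂P) ^ (1 / r) ≤ ENNReal.ofReal D)
    (hρrinv : (∫⁻ ω, ENNReal.ofReal (ρ ω ^ (-r)) ∂Q) ^ (1 / r) ≤ ENNReal.ofReal D)
    (X : Ω → ℝ) (hXmeas : Measurable X) (hXnn : ∀ ω, 0 ≤ X ω) :
    ∫⁻ ω, ENNReal.ofReal (X ω) ∂P ≤
      ENNReal.ofReal (D ^ ((1 + q) / q)) *
        (∫⁻ ω, ENNReal.ofReal (X ω ^ (q ^ 2)) ∂P) ^ (1 / q ^ 2) :=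
  stmt_10_general P ρ hρmeas hρpos Q hQ r q D hr hq hD hρr hρrinv X hXmeas hXnn
end
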